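/- arXiv:2503.14420 — 6 statements merged into one kernel-verified Lean document; each statement's English description precedes it below -/
import Mathlib

section
/- Let r > 1 be an integer, let f ∈ ℚ[x₁,…,x_r] be a nonzero polynomial, let S⁺, S⁻ ⊆ {1,…,r} be disjoint subsets, let T ⊆ {1,…,r}, and for each i ∈ T let (m_i, a_i) be a pair of integers with m_i > 1 and 0 ≤ a_i < m_i. Suppose there exists an index i₀ ∈ {1,…,r} such that either i₀ ∉ T, or i₀ ∈ T and gcd(a_{i₀}, m_{i₀}) = 1 (i.e. a_{i₀} is a unit modulo m_{i₀}). Then the set of tuples (n₁,…,n_r) ∈ ℤ^r satisfying: (1) f(n₁,…,n_r) ≠ 0 and ∏_{i=1}^r n_i ≠ 0; (2) n_i ≡ a_i (mod m_i) for all i ∈ T; (3) n_i > 0 for all i ∈ S⁺ and n_i < 0 for all i ∈ S⁻; and (4) n₁,…,n_r generate the unit ideal of ℤ (equivalently gcd(n₁,…,n_r) = 1, equivalently there exist integers c₁,…,c_r with ∑ c_i n_i = 1); is infinite. -/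
/-!
Pick `i₀` as in the hypothesis and any other index `j`. Coordinatewise, choose infinite sets of
integers in the prescribed residue class and of the prescribed sign: at `j` the numbers `v * w ^ k`
with `w ≡ 1`, at `i₀` numbers coprime to `v * w` (they exist in the class of `a i₀` because it is
a unit modulo `m i₀`). Then the `i₀`- and `j`-coordinates of every point of the resulting box are
coprime, and a nonzero polynomial is nonzero at infinitely many points of a box with infinite sides.
-/

open Function Set

namespace MvPolynomial

variable {R K σ : Type*} [CommRing K] [IsDomain K] {φ : R → K} {f : MvPolynomial σ K}
  {s : σ → Set R}

theorem exists_mem_pi_eval_comp_ne_zero (hφ : Injective φ) (hf : f ≠ 0)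
    (hs : ∀ i, (s i).Infinite) : ∃ x ∈ pi univ s, eval (φ ∘ x) f ≠ 0 := by
  by_contra! h
  refine hf (funext_set (fun i => φ '' s i) (fun i => (hs i).image hφ.injOn) fun y hy => ?_)
  choose x hxs hxy using mem_univ_pi.mp hy
  obtain rfl : φ ∘ x = y := _root_.funext hxy
  rw [h x (mem_univ_pi.mpr hxs), map_zero]

theorem infinite_setOf_mem_pi_eval_comp_ne_zero [Nonempty σ] (hφ : Injective φ) (hf : f ≠ 0)
    (hs : ∀ i, (s i).Infinite) : {x : σ → R | x ∈ pi univ s ∧ eval (φ ∘ x) f ≠ 0}.Infinite := by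
  classical
  intro hfin
  obtain ⟨i⟩ := ‹Nonempty σ›
  -- Removing the finitely many `i`-th coordinates of known solutions forces a new solution.
  set S := {x : σ → R | x ∈ pi univ s ∧ eval (φ ∘ x) f ≠ 0}
  set t := update s i (s i \ (fun x => x i) '' S) with ht_def
  have hts : ∀ k, t k ⊆ s k := by
    intro k
    rcases eq_or_ne k i with rfl | hk
    · rw [ht_def, update_self]; exact sdiff_subset
    · rw [ht_def, update_of_ne hk]
  have ht : ∀ k, (t k).Infinite := by
    intro k
    rcases eq_or_ne k i with rfl | hk
    · rw [ht_def, update_self]; exact (hs k).sdiff (hfin.image _)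
    · rw [ht_def, update_of_ne hk]; exact hs k
  obtain ⟨x, hxt, hfx⟩ := exists_mem_pi_eval_comp_ne_zero hφ hf ht
  have hxi := hxt i trivial
  rw [ht_def, update_self] at hxi
  exact hxi.2 ⟨x, ⟨fun k _ => hts k (hxt k trivial), hfx⟩, rfl⟩

end MvPolynomial

namespace Int

theorem infinite_setOf_modEq_and_pos {M : ℤ} (hM : M ≠ 0) (a : ℤ) (ε : ℤˣ) :
    {x : ℤ | x ≡ a [ZMOD M] ∧ 0 < ε * x}.Infinite := by
  have hM2 : 0 < M ^ 2 := by positivity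
  refine infinite_of_injective_forall_mem (f := fun k : ℕ => a + ε * M ^ 2 * (k + |a| + 1))
    (fun k l h => ?_) fun k => ⟨?_, ?_⟩
  · have hεM : (ε * M ^ 2 : ℤ) ≠ 0 := mul_ne_zero ε.ne_zero hM2.ne'
    have := mul_left_cancel₀ hεM (add_left_cancel h)
    exact_mod_cast (by linarith : (k : ℤ) = l)
  · exact (Int.modEq_iff_dvd.mpr ⟨ε * M * (k + |a| + 1), by ring⟩).symm
  · have := neg_abs_le a
    have := le_abs_self a
    rcases units_eq_one_or ε with rfl | rfl <;> simp <;> nlinarith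

theorem exists_modEq_and_isCoprime {a M v : ℤ} (ha : IsCoprime a M) (hM : M ≠ 0) (hv : v ≠ 0) :
    ∃ x, x ≡ a [ZMOD M] ∧ IsCoprime x v := by
  have : NeZero (M * v).natAbs := ⟨by simp [hM, hv]⟩
  have hdvd : M.natAbs ∣ (M * v).natAbs := natAbs_dvd_natAbs.mpr (dvd_mul_right M v)
  have hunit : IsUnit (a : ZMod M.natAbs) := by
    rw [ZMod.coe_int_isUnit_iff_isCoprime, natCast_natAbs, IsCoprime.abs_left_iff]
    exact ha.symm
  obtain ⟨u, hu⟩ := ZMod.unitsMap_surjective hdvd hunit.unit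
  refine ⟨(u : ZMod (M * v).natAbs).cast, ?_, ?_⟩
  · rw [← modEq_natAbs, ← ZMod.intCast_eq_intCast_iff, ZMod.intCast_cast,
      ← ZMod.unitsMap_val hdvd, hu]
    rfl
  · have : IsUnit (((u : ZMod (M * v).natAbs).cast : ℤ) : ZMod (M * v).natAbs) := by
      rw [ZMod.intCast_zmod_cast]; exact u.isUnit
    rw [ZMod.coe_int_isUnit_iff_isCoprime, natCast_natAbs, IsCoprime.abs_left_iff] at this
    exact this.symm.of_mul_right_right

theorem infinite_range_mul_pow {v w : ℤ} (hv : v ≠ 0) (hw : 1 < w.natAbs) :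
    (Set.range fun k : ℕ => v * w ^ k).Infinite :=
  infinite_range_of_injective ((mul_right_injective₀ hv).comp (pow_right_injective hw))

theorem infinite_setOf_modEq_and_pos_and_isCoprime {a M v : ℤ} (ha : IsCoprime a M) (hM : M ≠ 0)
    (hv : v ≠ 0) (ε : ℤˣ) : {x : ℤ | x ≡ a [ZMOD M] ∧ 0 < ε * x ∧ IsCoprime x v}.Infinite := by
  obtain ⟨x₀, hx₀a, hx₀v⟩ := exists_modEq_and_isCoprime ha hM hv
  refine (infinite_setOf_modEq_and_pos (mul_ne_zero hM hv) x₀ ε).mono ?_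
  rintro x ⟨hx, hpos⟩
  obtain ⟨k, hk⟩ := (hx.of_mul_left M).symm.dvd
  refine ⟨(hx.of_mul_right v).trans hx₀a, hpos, ?_⟩
  rw [sub_eq_iff_eq_add'] at hk
  exact hk ▸ hx₀v.add_mul_left_left k

end Int

open Int in
theorem exists_infinite_subsets_modEq_and_pos_isCoprime {ι : Type*} [DecidableEq ι] {i₀ j : ι}
    (hj : j ≠ i₀) {a M : ι → ℤ} (hM : ∀ i, M i ≠ 0) (ha : IsCoprime (a i₀) (M i₀))
    (ε : ι → ℤˣ) :
    ∃ B : ι → Set ℤ, (∀ i, (B i).Infinite) ∧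
      (∀ i, B i ⊆ {x | x ≡ a i [ZMOD M i] ∧ 0 < ε i * x}) ∧
      ∀ x ∈ B i₀, ∀ y ∈ B j, IsCoprime x y := by
  obtain ⟨v, hva, hvpos⟩ := (infinite_setOf_modEq_and_pos (hM j) (a j) (ε j)).nonempty
  have hv : v ≠ 0 := by rintro rfl; simp at hvpos
  -- Every `v * w ^ k` lies in the class of `v`; its prime factors are those of `v * w`.
  set w := 1 + M j ^ 2
  have hw : 1 < w := lt_add_of_pos_right 1 (by have := hM j; positivity)
  have hw1 : w ≡ 1 [ZMOD M j] := Int.modEq_iff_dvd.mpr ⟨-M j, by ring⟩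
  set P : ι → Set ℤ := fun i => {x | x ≡ a i [ZMOD M i] ∧ 0 < ε i * x}
  refine ⟨update (update P j (Set.range fun k : ℕ => v * w ^ k)) i₀
    {x | x ≡ a i₀ [ZMOD M i₀] ∧ 0 < ε i₀ * x ∧ IsCoprime x (v * w)}, fun i => ?_, fun i => ?_, ?_⟩
  · rcases eq_or_ne i i₀ with rfl | hi₀
    · rw [update_self]
      exact infinite_setOf_modEq_and_pos_and_isCoprime ha (hM i) (mul_ne_zero hv (by omega)) (ε i)
    rw [update_of_ne hi₀]
    rcases eq_or_ne i j with rfl | hij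
    · rw [update_self]; exact infinite_range_mul_pow hv (by omega)
    · rw [update_of_ne hij]; exact infinite_setOf_modEq_and_pos (hM i) (a i) (ε i)
  · rcases eq_or_ne i i₀ with rfl | hi₀
    · rw [update_self]; exact fun x hx => ⟨hx.1, hx.2.1⟩
    rw [update_of_ne hi₀]
    rcases eq_or_ne i j with rfl | hij
    · rw [update_self]
      rintro _ ⟨k, rfl⟩
      refine ⟨by simpa using hva.mul (hw1.pow k), ?_⟩
      rw [← mul_assoc]; exact mul_pos hvpos (pow_pos (by omega) k)
    · rw [update_of_ne hij]
  · rw [update_self, update_of_ne hj, update_self]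
    rintro x ⟨-, -, hx⟩ _ ⟨k, rfl⟩
    exact hx.of_mul_right_left.mul_right (hx.of_mul_right_right.pow_right)

theorem exists_sum_mul_eq_one_of_isCoprime {R ι : Type*} [CommSemiring R] [Fintype ι]
    [DecidableEq ι] {n : ι → R} {i j : ι} (h : IsCoprime (n i) (n j)) :
    ∃ c : ι → R, ∑ k, c k * n k = 1 := by
  obtain ⟨u, u', huu'⟩ := h
  refine ⟨Pi.single i u + Pi.single j u', ?_⟩
  simp [add_mul, Finset.sum_add_distrib, Pi.single_apply, huu']

theorem infinite_integer_points_nonvanishing_coprime_general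
    (r : ℕ) (hr : 1 < r) (f : MvPolynomial (Fin r) ℚ) (hf : f ≠ 0)
    (Splus Sminus : Finset (Fin r)) (hdisj : Disjoint Splus Sminus)
    (T : Finset (Fin r)) (m a : Fin r → ℤ)
    (hm : ∀ i ∈ T, 1 < m i)
    (hi₀ : ∃ i₀ : Fin r, i₀ ∉ T ∨ (i₀ ∈ T ∧ IsCoprime (a i₀) (m i₀))) :
    {n : Fin r → ℤ |
      MvPolynomial.eval (fun i => (n i : ℚ)) f ≠ 0 ∧ (∏ i, n i) ≠ 0 ∧
      (∀ i ∈ T, n i ≡ a i [ZMOD m i]) ∧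
      (∀ i ∈ Splus, 0 < n i) ∧ (∀ i ∈ Sminus, n i < 0) ∧
      (∃ c : Fin r → ℤ, ∑ i, c i * n i = 1)}.Infinite := by
  classical
  obtain ⟨i₀, hi₀⟩ := hi₀
  obtain ⟨j, hj⟩ := Fintype.exists_ne_of_one_lt_card (by simpa using hr) i₀
  -- Unconstrained coordinates are treated as the residue class of `0` modulo `1`.
  set b := fun i => if i ∈ T then a i else 0
  set M := fun i => if i ∈ T then m i else 1
  have hM : ∀ i, M i ≠ 0 := fun i => by
    by_cases hi : i ∈ T
    · simpa [M, hi] using (zero_lt_one.trans (hm i hi)).ne'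
    · simp [M, hi]
  have hb : IsCoprime (b i₀) (M i₀) := by
    rcases hi₀ with hi | ⟨hi, hcop⟩
    · simpa [b, M, hi] using isCoprime_one_right
    · simpa [b, M, hi] using hcop
  set ε : Fin r → ℤˣ := fun i => if i ∈ Sminus then -1 else 1
  obtain ⟨B, hBinf, hB, hBcop⟩ := exists_infinite_subsets_modEq_and_pos_isCoprime hj hM hb ε
  have : Nonempty (Fin r) := ⟨i₀⟩
  refine (MvPolynomial.infinite_setOf_mem_pi_eval_comp_ne_zero Int.cast_injective hf hBinf).mono ?_
  rintro n ⟨hnB, hfn⟩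
  have hn i : n i ≡ b i [ZMOD M i] ∧ 0 < ε i * n i := hB i (hnB i trivial)
  refine ⟨hfn, Finset.prod_ne_zero_iff.mpr fun i _ => ?_, fun i hi => ?_, fun i hi => ?_,
    fun i hi => ?_, exists_sum_mul_eq_one_of_isCoprime (hBcop _ (hnB i₀ trivial) _ (hnB j trivial))⟩
  · intro h; simpa [h] using (hn i).2
  · simpa [b, M, hi] using (hn i).1
  · simpa [ε, Finset.disjoint_left.mp hdisj hi] using (hn i).2
  · simpa [ε, hi] using (hn i).2

/-- As in Statement 0, but with `r > 1` and assuming there is an index `i₀`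
with either `i₀ ∉ T`, or `i₀ ∈ T` and `a i₀` a unit modulo `m i₀`; then there are
infinitely many tuples satisfying conditions (1)-(3) which moreover generate the unit
ideal of ℤ. -/
theorem infinite_integer_points_nonvanishing_coprime
    (r : ℕ) (hr : 1 < r) (f : MvPolynomial (Fin r) ℚ) (hf : f ≠ 0)
    (Splus Sminus : Finset (Fin r)) (hdisj : Disjoint Splus Sminus)
    (T : Finset (Fin r)) (m a : Fin r → ℤ)
    (hm : ∀ i ∈ T, 1 < m i) (ha : ∀ i ∈ T, 0 ≤ a i ∧ a i < m i)
    (hi₀ : ∃ i₀ : Fin r, i₀ ∉ T ∨ (i₀ ∈ T ∧ IsCoprime (a i₀) (m i₀))) :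
    {n : Fin r → ℤ |
      MvPolynomial.eval (fun i => (n i : ℚ)) f ≠ 0 ∧ (∏ i, n i) ≠ 0 ∧
      (∀ i ∈ T, n i ≡ a i [ZMOD m i]) ∧
      (∀ i ∈ Splus, 0 < n i) ∧ (∀ i ∈ Sminus, n i < 0) ∧
      (∃ c : Fin r → ℤ, ∑ i, c i * n i = 1)}.Infinite :=
  infinite_integer_points_nonvanishing_coprime_general r hr f hf Splus Sminus hdisj T m a hm hi₀
end

section
/- For a Laurent polynomial f = ∑_w c_w t^w ∈ ℤ[t,t⁻¹] define its weighted degree d(f) = ∑_w w·c_w ∈ ℤ. Let s = (s₁,s₂,s₃) ∈ ℤ³ and let π ⊆ (ℤ≥0)³ be a 3-dimensional partition of cardinality n, with partition function Q, trace function V, splitting V = V⁺ + V⁻, and S = s₁+s₂+s₃ as in the context. Then d(V⁺) = ∑_{k∈π}(s₁k₁+s₂k₂+s₃k₃), d(V⁻) = ∑_{k∈π}(s₁k₁+s₂k₂+s₃k₃) + n·S, and hence d(V) = 2·∑_{k∈π}(s₁k₁+s₂k₂+s₃k₃) + n·S. (In the paper this is phrased as the determinant identities det V⁺(t) = det Q(t),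 det V⁻(t) = det(−t^{−S}Q(t⁻¹)), det V(t) = t^{2∑_{k∈π} s·k + n(s₁+s₂+s₃)}.) -/
open LaurentPolynomial

/-- A 3-dimensional partition: a finite subset of `(ℤ≥0)³` that is downward closed. -/
def IsPartition3 (π : Finset (ℕ × ℕ × ℕ)) : Prop :=
  ∀ k ∈ π, ∀ k' : ℕ × ℕ × ℕ, k'.1 ≤ k.1 → k'.2.1 ≤ k.2.1 → k'.2.2 ≤ k.2.2 → k' ∈ π

/-- The partition function `Q(t) = ∑_{k∈π} t^{s₁k₁+s₂k₂+s₃k₃}`. -/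
noncomputable def partitionFun (s₁ s₂ s₃ : ℤ) (π : Finset (ℕ × ℕ × ℕ)) :
    LaurentPolynomial ℤ :=
  ∑ k ∈ π, T (s₁ * (k.1 : ℤ) + s₂ * (k.2.1 : ℤ) + s₃ * (k.2.2 : ℤ))

/-- The trace function
`V(t) = Q(t) − t^{−S}Q(t⁻¹) + Q(t)Q(t⁻¹)(1−t^{s₁})(1−t^{s₂})(1−t^{s₃})t^{−S}`. -/
noncomputable def traceFun (s₁ s₂ s₃ : ℤ) (π : Finset (ℕ × ℕ × ℕ)) : LaurentPolynomial ℤ :=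
  partitionFun s₁ s₂ s₃ π - T (-(s₁ + s₂ + s₃)) * invert (partitionFun s₁ s₂ s₃ π) +
    partitionFun s₁ s₂ s₃ π * invert (partitionFun s₁ s₂ s₃ π) *
      (1 - T s₁) * (1 - T s₂) * (1 - T s₃) * T (-(s₁ + s₂ + s₃))

/-- The positive part `V⁺(t) = Q(t) − Q(t)Q(t⁻¹)(1−t^{s₁})(1−t^{s₂})t^{−s₁−s₂}`. -/
noncomputable def Vplus (s₁ s₂ s₃ : ℤ) (π : Finset (ℕ × ℕ × ℕ)) : LaurentPolynomial ℤ :=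
  partitionFun s₁ s₂ s₃ π -
    partitionFun s₁ s₂ s₃ π * invert (partitionFun s₁ s₂ s₃ π) *
      (1 - T s₁) * (1 - T s₂) * T (-s₁ - s₂)

/-- The negative part
`V⁻(t) = −t^{−S}Q(t⁻¹) + Q(t)Q(t⁻¹)(1−t^{s₁})(1−t^{s₂})t^{−S}`, `S = s₁+s₂+s₃`. -/
noncomputable def Vminus (s₁ s₂ s₃ : ℤ) (π : Finset (ℕ × ℕ × ℕ)) : LaurentPolynomial ℤ :=
  -(T (-(s₁ + s₂ + s₃)) * invert (partitionFun s₁ s₂ s₃ π)) +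
    partitionFun s₁ s₂ s₃ π * invert (partitionFun s₁ s₂ s₃ π) *
      (1 - T s₁) * (1 - T s₂) * T (-(s₁ + s₂ + s₃))

/-- The weighted degree `d(∑ c_w t^w) = ∑ w·c_w` of a Laurent polynomial. -/
noncomputable def wdeg (f : LaurentPolynomial ℤ) : ℤ :=
  Finsupp.sum (AddMonoidAlgebra.coeff f) fun w c => w * c

/-!
The weighted degree `d(∑ c_w t^w) = ∑ w c_w` is the value at `t = 1` of `t · df/dt`, so it is
additive, satisfies the Leibniz rule `d(fg) = d(f) g(1) + f(1) d(g)` and changes sign under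
`t ↦ t⁻¹`. Every correction term in `V⁺` and `V⁻` carries the factor `(1 - t^{s₁})(1 - t^{s₂})`,
which has a double zero at `t = 1`, so it contributes nothing; what is left are `d(Q)` and
`d(-t^{-S} Q(t⁻¹)) = n S + d(Q)`, using `Q(1) = n`. Finally `V = V⁺ + V⁻`.
-/

noncomputable abbrev evalOne : LaurentPolynomial ℤ →+* ℤ := eval₂ (RingHom.id ℤ) 1

lemma evalOne_T (n : ℤ) : evalOne (T n) = 1 := by
  simp

lemma evalOne_single (a c : ℤ) : evalOne (AddMonoidAlgebra.single a c) = c := by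
  simp [single_eq_C_mul_T]

lemma evalOne_invert (f : LaurentPolynomial ℤ) : evalOne (invert f) = evalOne f := by
  induction f using LaurentPolynomial.induction_on' with
  | add f g hf hg => simp only [map_add, hf, hg]
  | C_mul_T n a => simp

noncomputable def wdegAddHom : LaurentPolynomial ℤ →+ ℤ :=
  (Finsupp.liftAddHom fun w => AddMonoidHom.mulLeft w).comp
    AddMonoidAlgebra.coeffAddEquiv.toAddMonoidHom

lemma wdegAddHom_apply (f : LaurentPolynomial ℤ) : wdegAddHom f = wdeg f := rfl

lemma wdeg_add (f g : LaurentPolynomial ℤ) : wdeg (f + g) = wdeg f + wdeg g :=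
  map_add wdegAddHom f g

lemma wdeg_neg (f : LaurentPolynomial ℤ) : wdeg (-f) = -wdeg f :=
  map_neg wdegAddHom f

lemma wdeg_sub (f g : LaurentPolynomial ℤ) : wdeg (f - g) = wdeg f - wdeg g :=
  map_sub wdegAddHom f g

lemma wdeg_sum {ι : Type*} (s : Finset ι) (f : ι → LaurentPolynomial ℤ) :
    wdeg (∑ i ∈ s, f i) = ∑ i ∈ s, wdeg (f i) :=
  map_sum wdegAddHom f s

lemma wdeg_single (a c : ℤ) : wdeg (AddMonoidAlgebra.single a c) = a * c :=
  Finsupp.sum_single_index (mul_zero a)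

lemma wdeg_T (n : ℤ) : wdeg (T n) = n := by
  simpa using wdeg_single n 1

lemma wdeg_mul (f g : LaurentPolynomial ℤ) :
    wdeg (f * g) = wdeg f * evalOne g + evalOne f * wdeg g := by
  induction f using AddMonoidAlgebra.induction_linear with
  | zero => simp [← wdegAddHom_apply]
  | add f f' hf hf' => rw [add_mul, wdeg_add, wdeg_add, hf, hf', map_add]; ring
  | single a c =>
    induction g using AddMonoidAlgebra.induction_linear with
    | zero => simp [← wdegAddHom_apply]
    | add g g' hg hg' => rw [mul_add, wdeg_add, wdeg_add, hg, hg', map_add]; ring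
    | single b d =>
      rw [AddMonoidAlgebra.single_mul_single, wdeg_single, wdeg_single, wdeg_single,
        evalOne_single, evalOne_single]
      ring

lemma wdeg_invert (f : LaurentPolynomial ℤ) : wdeg (invert f) = -wdeg f := by
  induction f using AddMonoidAlgebra.induction_linear with
  | zero => simp [← wdegAddHom_apply]
  | add f g hf hg => rw [map_add, wdeg_add, wdeg_add, hf, hg, neg_add]
  | single a c =>
    rw [single_eq_C_mul_T, map_mul, invert_C, invert_T, ← single_eq_C_mul_T,
      ← single_eq_C_mul_T, wdeg_single, wdeg_single, neg_mul]

lemma wdeg_mul_of_evalOne_eq_zero {f : LaurentPolynomial ℤ} (hf : evalOne f = 0)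
    (g : LaurentPolynomial ℤ) : wdeg (f * g) = wdeg f * evalOne g := by
  rw [wdeg_mul, hf, zero_mul, add_zero]

lemma wdeg_mul_one_sub_T_mul_one_sub_T_mul (f g : LaurentPolynomial ℤ) (a b : ℤ) :
    wdeg (f * (1 - T a) * (1 - T b) * g) = 0 := by
  have h₁ : evalOne (f * (1 - T a)) = 0 := by simp
  have h₂ : evalOne (f * (1 - T a) * (1 - T b)) = 0 := by simp
  rw [wdeg_mul_of_evalOne_eq_zero h₂, wdeg_mul_of_evalOne_eq_zero h₁]
  simp

lemma evalOne_partitionFun (s₁ s₂ s₃ : ℤ) (π : Finset (ℕ × ℕ × ℕ)) :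
    evalOne (partitionFun s₁ s₂ s₃ π) = π.card := by
  simp [partitionFun]

lemma wdeg_partitionFun (s₁ s₂ s₃ : ℤ) (π : Finset (ℕ × ℕ × ℕ)) :
    wdeg (partitionFun s₁ s₂ s₃ π) =
      ∑ k ∈ π, (s₁ * (k.1 : ℤ) + s₂ * (k.2.1 : ℤ) + s₃ * (k.2.2 : ℤ)) := by
  simp only [partitionFun, wdeg_sum, wdeg_T]

lemma traceFun_eq_Vplus_add_Vminus (s₁ s₂ s₃ : ℤ) (π : Finset (ℕ × ℕ × ℕ)) :
    traceFun s₁ s₂ s₃ π = Vplus s₁ s₂ s₃ π + Vminus s₁ s₂ s₃ π := by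
  have hT : (T (-s₁ - s₂) : LaurentPolynomial ℤ) = T (-(s₁ + s₂ + s₃)) * T s₃ := by
    rw [← T_add]; ring_nf
  rw [traceFun, Vplus, Vminus, hT]
  ring

lemma wdeg_Vplus (s₁ s₂ s₃ : ℤ) (π : Finset (ℕ × ℕ × ℕ)) :
    wdeg (Vplus s₁ s₂ s₃ π) = wdeg (partitionFun s₁ s₂ s₃ π) := by
  rw [Vplus, wdeg_sub, wdeg_mul_one_sub_T_mul_one_sub_T_mul, sub_zero]

lemma wdeg_Vminus (s₁ s₂ s₃ : ℤ) (π : Finset (ℕ × ℕ × ℕ)) :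
    wdeg (Vminus s₁ s₂ s₃ π) =
      wdeg (partitionFun s₁ s₂ s₃ π) + π.card * (s₁ + s₂ + s₃) := by
  rw [Vminus, wdeg_add, wdeg_mul_one_sub_T_mul_one_sub_T_mul, wdeg_neg, wdeg_mul, wdeg_T,
    wdeg_invert, evalOne_T, evalOne_invert, evalOne_partitionFun]
  ring

theorem wdeg_Vplus_Vminus_trace_general
    (s₁ s₂ s₃ : ℤ) (π : Finset (ℕ × ℕ × ℕ)) (n : ℕ)
    (hn : π.card = n) :
    wdeg (Vplus s₁ s₂ s₃ π) =
        ∑ k ∈ π, (s₁ * (k.1 : ℤ) + s₂ * (k.2.1 : ℤ) + s₃ * (k.2.2 : ℤ)) ∧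
    wdeg (Vminus s₁ s₂ s₃ π) =
        (∑ k ∈ π, (s₁ * (k.1 : ℤ) + s₂ * (k.2.1 : ℤ) + s₃ * (k.2.2 : ℤ))) +
          (n : ℤ) * (s₁ + s₂ + s₃) ∧
    wdeg (traceFun s₁ s₂ s₃ π) =
        2 * (∑ k ∈ π, (s₁ * (k.1 : ℤ) + s₂ * (k.2.1 : ℤ) + s₃ * (k.2.2 : ℤ))) +
          (n : ℤ) * (s₁ + s₂ + s₃) := by
  subst hn
  have hplus := wdeg_Vplus s₁ s₂ s₃ π
  have hminus := wdeg_Vminus s₁ s₂ s₃ π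
  rw [wdeg_partitionFun] at hplus hminus
  refine ⟨hplus, hminus, ?_⟩
  rw [traceFun_eq_Vplus_add_Vminus, wdeg_add, hplus, hminus]
  ring

/-- for a 3-dimensional partition `π` of cardinality `n`,
`d(V⁺) = ∑_{k∈π} s·k`, `d(V⁻) = ∑_{k∈π} s·k + n·S`, and
`d(V) = 2∑_{k∈π} s·k + n·S`. -/
theorem wdeg_Vplus_Vminus_trace
    (s₁ s₂ s₃ : ℤ) (π : Finset (ℕ × ℕ × ℕ)) (hπ : IsPartition3 π) (n : ℕ)
    (hn : π.card = n) :
    wdeg (Vplus s₁ s₂ s₃ π) =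
        ∑ k ∈ π, (s₁ * (k.1 : ℤ) + s₂ * (k.2.1 : ℤ) + s₃ * (k.2.2 : ℤ)) ∧
    wdeg (Vminus s₁ s₂ s₃ π) =
        (∑ k ∈ π, (s₁ * (k.1 : ℤ) + s₂ * (k.2.1 : ℤ) + s₃ * (k.2.2 : ℤ))) +
          (n : ℤ) * (s₁ + s₂ + s₃) ∧
    wdeg (traceFun s₁ s₂ s₃ π) =
        2 * (∑ k ∈ π, (s₁ * (k.1 : ℤ) + s₂ * (k.2.1 : ℤ) + s₃ * (k.2.2 : ℤ))) +
          (n : ℤ) * (s₁ + s₂ + s₃) :=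
  wdeg_Vplus_Vminus_trace_general s₁ s₂ s₃ π n hn
end

section
/- Let s = (s₁,s₂,s₃) ∈ ℤ³ with every s_i even and with S = s₁+s₂+s₃ ≡ 2 (mod 4). Let π ⊆ (ℤ≥0)³ be a 3-dimensional partition of cardinality n, and write its trace function as V(t) = ∑_{w∈ℤ} v_w·t^w with v_w ∈ ℤ. Then ∏_{w∈ℤ} ε(w)^{v_w} = (−1)^n, where the product is the finite product over those w with v_w ≠ 0, and ε(w)^{v_w} denotes the (possibly negative) integer power of ε(w) ∈ {±1}. -/
open LaurentPolynomial

/-- The sign function `ε : ℤ → {±1}`: `ε(m) = +1` if `m ≡ 1, 2 (mod 4)` and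
`ε(m) = −1` if `m ≡ 0, 3 (mod 4)`. -/
def signEps (m : ℤ) : ℤ := if m % 4 = 1 ∨ m % 4 = 2 then 1 else -1

/-!
Map `ℤ[t, t⁻¹]` to the group algebra `𝔽₂[ℤ/4]`, reducing coefficients mod 2 and exponents
mod 4. Since `ε(w) = -1` exactly for `w ≡ 0, 3 (mod 4)`, the product `∏ ε(w)^{v_w}` is `(-1)^N`
with `N = ∑_{w ≡ 0, 3} v_w`, and `N mod 2` is an additive functional of the image of `V`.

Let `x` be the image of `t²`. As all `sᵢ` are even, every monomial of `Q(t)`, `Q(t⁻¹)` and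
`t^{sᵢ}` maps into `{1, x}`, while `t^{-S}` maps to `x`. Since `x² = 1` and the characteristic
is 2, `(1 - y)(1 - y') = 0` and `(1 - x) y = 1 - x` for `y, y' ∈ {1, x}`, and `Q(t⁻¹)` has the
same image as `Q(t)`. So the image of `V` collapses to `(1 - x) Q = n (1 - x)`, on which the
functional takes the value `n`.
-/

open AddMonoidAlgebra

def epsExponent (c : ZMod 4) : ℤ := if c = 0 ∨ c = 3 then 1 else 0

lemma signEps_eq_neg_one_zpow {K : Type*} [DivisionRing K] (w : ℤ) :
    (signEps w : K) = (-1) ^ epsExponent w := by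
  have hcast : (w : ZMod 4) = ((w % 4 : ℤ) : ZMod 4) := (ZMod.intCast_mod w 4).symm
  have hw : w % 4 = 0 ∨ w % 4 = 1 ∨ w % 4 = 2 ∨ w % 4 = 3 := by omega
  rcases hw with h | h | h | h <;> simp +decide [signEps, epsExponent, hcast, h]

lemma prod_neg_one_zpow {K ι : Type*} [Field K] (s : Finset ι) (a : ι → ℤ) :
    ∏ i ∈ s, (-1 : K) ^ a i = (-1) ^ ∑ i ∈ s, a i := by
  classical
  induction s using Finset.induction_on with
  | empty => simp
  | insert i s hi ih =>
    rw [Finset.prod_insert hi, Finset.sum_insert hi, ih, zpow_add₀ (neg_ne_zero.mpr one_ne_zero)]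

lemma prod_signEps_zpow {K : Type*} [Field K] (f : ℤ →₀ ℤ) :
    ∏ w ∈ f.support, (signEps w : K) ^ f w = (-1) ^ ∑ w ∈ f.support, epsExponent w * f w := by
  rw [← prod_neg_one_zpow]
  exact Finset.prod_congr rfl fun w _ => by rw [signEps_eq_neg_one_zpow, zpow_mul]

lemma neg_one_zpow_congr {K : Type*} [DivisionRing K] {a b : ℤ} (h : (a : ZMod 2) = b) :
    (-1 : K) ^ a = (-1) ^ b := by
  have hab : Even a ↔ Even b := by
    rw [← ZMod.intCast_eq_zero_iff_even, ← ZMod.intCast_eq_zero_iff_even, h]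
  simp only [neg_one_zpow_eq_ite, hab]

instance (p : ℕ) [Fact p.Prime] (G : Type*) [AddMonoid G] :
    CharP (AddMonoidAlgebra (ZMod p) G) p :=
  charP_of_injective_algebraMap' (ZMod p) p

noncomputable def reduce24 : LaurentPolynomial ℤ →+* AddMonoidAlgebra (ZMod 2) (ZMod 4) :=
  (mapRingHom (ZMod 4) (Int.castRingHom (ZMod 2))).comp
    (mapDomainRingHom ℤ (Int.castAddHom (ZMod 4)))

lemma reduce24_single (w k : ℤ) :
    reduce24 (single w k) = single (w : ZMod 4) (k : ZMod 2) := by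
  rw [reduce24, RingHom.comp_apply, mapDomainRingHom_apply, mapDomain_single, mapRingHom_single]
  rfl

lemma reduce24_T_congr {m m' : ℤ} (h : m ≡ m' [ZMOD 4]) : reduce24 (T m) = reduce24 (T m') := by
  rw [T, T, reduce24_single, reduce24_single, (ZMod.intCast_eq_intCast_iff m m' 4).mpr h]

lemma reduce24_T_neg {m : ℤ} (hm : Even m) : reduce24 (T (-m)) = reduce24 (T m) := by
  obtain ⟨r, rfl⟩ := hm
  exact reduce24_T_congr (Int.modEq_iff_dvd.mpr ⟨r, by ring⟩)

lemma reduce24_T_of_even {m : ℤ} (hm : Even m) :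
    reduce24 (T m) = 1 ∨ reduce24 (T m) = reduce24 (T 2) := by
  obtain ⟨r, rfl⟩ := hm
  rw [← map_one reduce24, ← T_zero]
  rcases Int.even_or_odd r with ⟨q, rfl⟩ | ⟨q, rfl⟩
  · exact .inl (reduce24_T_congr (Int.modEq_iff_dvd.mpr ⟨-q, by ring⟩))
  · exact .inr (reduce24_T_congr (Int.modEq_iff_dvd.mpr ⟨-q, by ring⟩))

lemma reduce24_T_two_mul_self : reduce24 (T 2) * reduce24 (T 2) = 1 := by
  rw [← map_mul, ← T_add, reduce24_T_congr (show 2 + 2 ≡ 0 [ZMOD 4] from rfl), T_zero, map_one]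

lemma one_sub_reduce24_T_two_mul_T {m : ℤ} (hm : Even m) :
    (1 - reduce24 (T 2)) * reduce24 (T m) = 1 - reduce24 (T 2) := by
  rcases reduce24_T_of_even hm with h | h <;> rw [h]
  · exact mul_one _
  · rw [sub_mul, one_mul, reduce24_T_two_mul_self, CharTwo.sub_eq_add, CharTwo.sub_eq_add,
      add_comm]

lemma one_sub_reduce24_T_mul_one_sub {m m' : ℤ} (hm : Even m) (hm' : Even m') :
    (1 - reduce24 (T m)) * (1 - reduce24 (T m')) = 0 := by
  rcases reduce24_T_of_even hm with h | h
  · rw [h, sub_self, zero_mul]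
  rcases reduce24_T_of_even hm' with h' | h'
  · rw [h', sub_self, mul_zero]
  rw [h, h', CharTwo.sub_eq_add, CharTwo.add_mul_self, one_mul, reduce24_T_two_mul_self,
    CharTwo.add_self_eq_zero]

section SumT

variable {ι : Type*} (s : Finset ι) {e : ι → ℤ}

lemma reduce24_invert_sum_T (he : ∀ i ∈ s, Even (e i)) :
    reduce24 (invert (∑ i ∈ s, T (e i))) = reduce24 (∑ i ∈ s, T (e i)) := by
  simp only [map_sum, invert_T]
  exact Finset.sum_congr rfl fun i hi => reduce24_T_neg (he i hi)

lemma one_sub_reduce24_T_two_mul_sum_T (he : ∀ i ∈ s, Even (e i)) :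
    (1 - reduce24 (T 2)) * reduce24 (∑ i ∈ s, T (e i)) = s.card • (1 - reduce24 (T 2)) := by
  rw [map_sum, Finset.mul_sum,
    Finset.sum_congr rfl fun i hi => one_sub_reduce24_T_two_mul_T (he i hi), Finset.sum_const]

end SumT

lemma reduce24_traceFun {s₁ s₂ s₃ : ℤ} (hs₁ : Even s₁) (hs₂ : Even s₂) (hs₃ : Even s₃)
    (hS : s₁ + s₂ + s₃ ≡ 2 [ZMOD 4]) (π : Finset (ℕ × ℕ × ℕ)) :
    reduce24 (traceFun s₁ s₂ s₃ π) = π.card • (1 - reduce24 (T 2)) := by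
  have he : ∀ k ∈ π, Even (s₁ * (k.1 : ℤ) + s₂ * (k.2.1 : ℤ) + s₃ * (k.2.2 : ℤ)) :=
    fun k _ => ((hs₁.mul_right _).add (hs₂.mul_right _)).add (hs₃.mul_right _)
  have hS' : reduce24 (T (-(s₁ + s₂ + s₃))) = reduce24 (T 2) :=
    (reduce24_T_neg ((hs₁.add hs₂).add hs₃)).trans (reduce24_T_congr hS)
  simp only [traceFun, map_add, map_sub, map_mul, map_one, partitionFun,
    reduce24_invert_sum_T π he, hS']
  rw [mul_assoc (_ * _) (1 - reduce24 (T s₁)), one_sub_reduce24_T_mul_one_sub hs₁ hs₂, mul_zero,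
    zero_mul, zero_mul, add_zero, ← one_sub_mul, one_sub_reduce24_T_two_mul_sum_T π he]

noncomputable def epsWeight : AddMonoidAlgebra (ZMod 2) (ZMod 4) →+ ZMod 2 :=
  (Finsupp.liftAddHom fun c => AddMonoidHom.mulLeft (epsExponent c : ZMod 2)).comp
    (coeffAddEquiv : AddMonoidAlgebra (ZMod 2) (ZMod 4) ≃+ _).toAddMonoidHom

lemma epsWeight_single (c : ZMod 4) (a : ZMod 2) :
    epsWeight (single c a) = epsExponent c * a := by
  simp [epsWeight]

lemma epsWeight_reduce24 (f : LaurentPolynomial ℤ) :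
    epsWeight (reduce24 f) = ((∑ w ∈ f.coeff.support, epsExponent w * f.coeff w : ℤ) : ZMod 2) := by
  conv_lhs => rw [← sum_coeff_single f]
  rw [map_finsuppSum, map_finsuppSum, Finsupp.sum]
  push_cast
  simp only [reduce24_single, epsWeight_single]

lemma epsWeight_one_sub_reduce24_T_two : epsWeight (1 - reduce24 (T 2)) = 1 := by
  rw [map_sub, one_def, T, reduce24_single, epsWeight_single, epsWeight_single]
  decide

theorem prod_signEps_pow_traceCoeff_general
    (s₁ s₂ s₃ : ℤ) (hs₁ : Even s₁) (hs₂ : Even s₂) (hs₃ : Even s₃)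
    (hS : s₁ + s₂ + s₃ ≡ 2 [ZMOD 4])
    (π : Finset (ℕ × ℕ × ℕ)) (n : ℕ) (hn : π.card = n) :
    ∏ w ∈ Finsupp.support (traceFun s₁ s₂ s₃ π).coeff,
        ((signEps w : ℚ)) ^ ((traceFun s₁ s₂ s₃ π).coeff w) = (-1 : ℚ) ^ n := by
  rw [prod_signEps_zpow, ← zpow_natCast]
  refine neg_one_zpow_congr ?_
  rw [← epsWeight_reduce24, reduce24_traceFun hs₁ hs₂ hs₃ hS, map_nsmul,
    epsWeight_one_sub_reduce24_T_two, hn, nsmul_one, Int.cast_natCast]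

/-- if all `sᵢ` are even and `S = s₁+s₂+s₃ ≡ 2 (mod 4)`, then writing
`V(t) = ∑_w v_w t^w` for a 3-dimensional partition `π` of cardinality `n`, one has
`∏_w ε(w)^{v_w} = (−1)^n` (the product over those `w` with `v_w ≠ 0`). -/
theorem prod_signEps_pow_traceCoeff
    (s₁ s₂ s₃ : ℤ) (hs₁ : Even s₁) (hs₂ : Even s₂) (hs₃ : Even s₃)
    (hS : s₁ + s₂ + s₃ ≡ 2 [ZMOD 4])
    (π : Finset (ℕ × ℕ × ℕ)) (hπ : IsPartition3 π) (n : ℕ) (hn : π.card = n) :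
    ∏ w ∈ Finsupp.support (traceFun s₁ s₂ s₃ π).coeff,
        ((signEps w : ℚ)) ^ ((traceFun s₁ s₂ s₃ π).coeff w) = (-1 : ℚ) ^ n :=
  prod_signEps_pow_traceCoeff_general s₁ s₂ s₃ hs₁ hs₂ hs₃ hS π n hn
end

section
/- Let s = (s₁,s₂,s₃) ∈ ℤ³ with every s_i even and with S = s₁+s₂+s₃ ≡ 2 (mod 4). Let π ⊆ (ℤ≥0)³ be a 3-dimensional partition of cardinality n, and write its trace function as V(t) = ∑_{w∈ℤ} v_w·t^w with v_w ∈ ℤ. Assume moreover v₀ = 0. Then in ℚ one has ∏_{w : v_w ≠ 0} (ε(w)·w)^{−v_w} = (−1)^n · ∏_{w : v_w ≠ 0} w^{−v_w}, where both sides are finite products of integer powers (with possibly negative exponents) of nonzero rational numbers. -/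
open LaurentPolynomial

/-! Every exponent occurring in `V` is even, and `ε(w) = -iʷ` for even `w`. Hence the sign on the
left is `(-1)^M` with `M = ∑_{ε(w) = -1} v_w`, and `2M = V(1) + V(i)`. Here `V(1) = 0`, while
evaluating the defining formula at `t = i` (where `i^{-S} = -1`, `Q(i⁻¹) = Q(-i) = Q(i)` and
`1 - i^{sⱼ} ∈ {0, 2}`) gives `V(i) ≡ 2q (mod 8)` for `q = Q(i)`, a sum of `n` signs.
So `M ≡ q ≡ n (mod 2)`. -/

theorem Finset.prod_zpow_eq_zpow_sum {ι G₀ : Type*} [CommGroupWithZero G₀] {a : G₀} (ha : a ≠ 0)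
    (s : Finset ι) (g : ι → ℤ) : ∏ i ∈ s, a ^ g i = a ^ ∑ i ∈ s, g i := by
  classical
  induction s using Finset.induction_on with
  | empty => simp
  | insert i s hi ih => rw [Finset.prod_insert hi, Finset.sum_insert hi, ih, zpow_add₀ ha]

namespace LaurentPolynomial

section EvenSupport

variable {R : Type*} [CommRing R]

variable (R) in
def evenSubring : Subring R[T;T⁻¹] where
  carrier := {p | ∀ w ∈ p.coeff.support, Even w}
  zero_mem' := by simp
  one_mem' w hw := by
    rw [Finset.mem_singleton.mp (Finsupp.support_single_subset hw)]
    exact ⟨0, rfl⟩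
  add_mem' hp hq w hw := (Finset.mem_union.mp (Finsupp.support_add hw)).elim (hp w) (hq w)
  neg_mem' hp w hw := hp w (by simpa using hw)
  mul_mem' {p q} hp hq w hw := by
    classical
    obtain ⟨u, hu, v, hv, rfl⟩ :=
      Finset.mem_add.mp (AddMonoidAlgebra.support_coeff_mul_subset p q hw)
    exact (hp u hu).add (hq v hv)

theorem T_mem_evenSubring {n : ℤ} (hn : Even n) : (T n : R[T;T⁻¹]) ∈ evenSubring R := by
  intro w hw
  rwa [Finset.mem_singleton.mp (Finsupp.support_single_subset hw)]

theorem invert_mem_evenSubring {p : R[T;T⁻¹]} (hp : p ∈ evenSubring R) :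
    invert p ∈ evenSubring R := fun w hw =>
  even_neg.mp (hp (-w) (by simpa using hw))

end EvenSupport

section Eval₂

variable {R S : Type*} [CommSemiring R] [CommSemiring S] (f : R →+* S) (x : Sˣ)

theorem eval₂_eq_sum_coeff (p : R[T;T⁻¹]) :
    eval₂ f x p = ∑ w ∈ p.coeff.support, f (p.coeff w) * ↑(x ^ w) := by
  conv_lhs => rw [← AddMonoidAlgebra.sum_coeff_single p, Finsupp.sum, map_sum]
  simp [single_eq_C_mul_T]

theorem eval₂_one_eq_sum_coeff (p : R[T;T⁻¹]) :
    eval₂ (RingHom.id R) 1 p = ∑ w ∈ p.coeff.support, p.coeff w := by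
  simp [eval₂_eq_sum_coeff]

theorem eval₂_invert (p : R[T;T⁻¹]) : eval₂ f x (invert p) = eval₂ f x⁻¹ p := by
  induction p using LaurentPolynomial.induction_on' with
  | add p q hp hq => rw [map_add, map_add, map_add, hp, hq]
  | C_mul_T n a => simp [inv_zpow']

end Eval₂

theorem eval₂_neg_of_mem_evenSubring {R S : Type*} [CommRing R] [CommRing S] (f : R →+* S)
    (x : Sˣ) {p : R[T;T⁻¹]} (hp : p ∈ evenSubring R) : eval₂ f (-x) p = eval₂ f x p := by
  simp only [eval₂_eq_sum_coeff]
  exact Finset.sum_congr rfl fun w hw => by rw [(hp w hw).neg_zpow]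

end LaurentPolynomial

theorem signEps_eq_one_or_neg_one (m : ℤ) : signEps m = 1 ∨ signEps m = -1 := by
  unfold signEps
  split_ifs <;> simp

theorem even_one_add_signEps (m : ℤ) : Even (1 + signEps m) := by
  rcases signEps_eq_one_or_neg_one m with h | h <;> rw [h] <;> decide

theorem prod_signEps_zpow_neg (s : Finset ℤ) (g : ℤ → ℤ) :
    ∏ w ∈ s, (signEps w : ℚ) ^ (-g w) = (-1) ^ ∑ w ∈ s with signEps w = -1, g w := by
  rw [Finset.sum_filter, ← Finset.prod_zpow_eq_zpow_sum (by norm_num)]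
  refine Finset.prod_congr rfl fun w _ => ?_
  rcases signEps_eq_one_or_neg_one w with h | h
  · simp [h]
  · simp [h, zpow_neg, ← inv_zpow]

section SqrtNegOne

variable {S : Type*} [CommRing S] {x : Sˣ}

theorem val_zpow_of_sq_eq_neg_one (hx : x ^ 2 = -1) {w : ℤ} (hw : Even w) :
    ((x ^ w : Sˣ) : S) = -(signEps w : S) := by
  obtain ⟨k, rfl⟩ := hw
  rw [← two_mul, zpow_mul, zpow_ofNat, hx]
  rcases Int.even_or_odd k with hk | hk
  · have h4 : (2 * k) % 4 = 0 := by obtain ⟨j, rfl⟩ := hk; omega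
    simp [hk.neg_one_zpow, signEps, h4]
  · have h4 : (2 * k) % 4 = 2 := by obtain ⟨j, rfl⟩ := hk; omega
    simp [hk.neg_one_zpow, signEps, h4]

theorem eval₂_eq_of_sq_eq_neg_one (hx : x ^ 2 = -1) {p : ℤ[T;T⁻¹]} (hp : p ∈ evenSubring ℤ) :
    eval₂ (Int.castRingHom S) x p = ((2 * ∑ w ∈ p.coeff.support with signEps w = -1, p.coeff w -
      ∑ w ∈ p.coeff.support, p.coeff w : ℤ) : S) := by
  rw [eval₂_eq_sum_coeff, Finset.sum_filter, Finset.mul_sum, ← Finset.sum_sub_distrib]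
  push_cast
  refine Finset.sum_congr rfl fun w hw => ?_
  rw [val_zpow_of_sq_eq_neg_one hx (hp w hw)]
  rcases signEps_eq_one_or_neg_one w with h | h
  · simp [h]
  · simp [h]
    ring

end SqrtNegOne

section TraceFunction

variable (s₁ s₂ s₃ : ℤ) (π : Finset (ℕ × ℕ × ℕ))

theorem partitionFun_mem_evenSubring (hs₁ : Even s₁) (hs₂ : Even s₂) (hs₃ : Even s₃) :
    partitionFun s₁ s₂ s₃ π ∈ evenSubring ℤ :=
  sum_mem fun _ _ =>
    T_mem_evenSubring (((hs₁.mul_right _).add (hs₂.mul_right _)).add (hs₃.mul_right _))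

theorem traceFun_mem_evenSubring (hs₁ : Even s₁) (hs₂ : Even s₂) (hs₃ : Even s₃) :
    traceFun s₁ s₂ s₃ π ∈ evenSubring ℤ := by
  have hQ := partitionFun_mem_evenSubring s₁ s₂ s₃ π hs₁ hs₂ hs₃
  have hQ' := invert_mem_evenSubring hQ
  have hS : Even (-(s₁ + s₂ + s₃)) := ((hs₁.add hs₂).add hs₃).neg
  have hT {m : ℤ} (hm : Even m) : 1 - T m ∈ evenSubring ℤ :=
    sub_mem (one_mem _) (T_mem_evenSubring hm)
  exact add_mem (sub_mem hQ (mul_mem (T_mem_evenSubring hS) hQ'))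
    (mul_mem (mul_mem (mul_mem (mul_mem (mul_mem hQ hQ') (hT hs₁)) (hT hs₂)) (hT hs₃))
      (T_mem_evenSubring hS))

theorem eval₂_one_partitionFun :
    eval₂ (RingHom.id ℤ) 1 (partitionFun s₁ s₂ s₃ π) = π.card := by
  simp [partitionFun, eval₂_T]

theorem eval₂_one_traceFun : eval₂ (RingHom.id ℤ) 1 (traceFun s₁ s₂ s₃ π) = 0 := by
  simp [traceFun, eval₂_invert, eval₂_one_partitionFun]

theorem eval₂_traceFun_of_sq_eq_neg_one {S : Type*} [CommRing S] {x : Sˣ} (hx : x ^ 2 = -1)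
    (hs₁ : Even s₁) (hs₂ : Even s₂) (hs₃ : Even s₃) (hS : s₁ + s₂ + s₃ ≡ 2 [ZMOD 4]) :
    eval₂ (Int.castRingHom S) x (traceFun s₁ s₂ s₃ π) =
      2 * eval₂ (Int.castRingHom S) x (partitionFun s₁ s₂ s₃ π) -
        eval₂ (Int.castRingHom S) x (partitionFun s₁ s₂ s₃ π) ^ 2 *
          ((1 + signEps s₁) * (1 + signEps s₂) * (1 + signEps s₃) : ℤ) := by
  have hQ := partitionFun_mem_evenSubring s₁ s₂ s₃ π hs₁ hs₂ hs₃
  have hinv : x⁻¹ = -x := inv_eq_of_mul_eq_one_right (by rw [mul_neg, ← sq, hx, neg_neg])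
  have hxS : ((x ^ (-(s₁ + s₂ + s₃)) : Sˣ) : S) = -1 := by
    have h4 : (-(s₁ + s₂ + s₃)) % 4 = 2 := by unfold Int.ModEq at hS; omega
    rw [val_zpow_of_sq_eq_neg_one hx ((hs₁.add hs₂).add hs₃).neg, signEps, if_pos (Or.inr h4)]
    simp
  simp only [traceFun, map_add, map_sub, map_mul, map_one, eval₂_T, eval₂_invert, hinv,
    eval₂_neg_of_mem_evenSubring _ _ hQ, hxS, val_zpow_of_sq_eq_neg_one hx hs₁,
    val_zpow_of_sq_eq_neg_one hx hs₂, val_zpow_of_sq_eq_neg_one hx hs₃]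
  push_cast
  ring

theorem even_sum_coeff_traceFun_sub_card (hs₁ : Even s₁) (hs₂ : Even s₂) (hs₃ : Even s₃)
    (hS : s₁ + s₂ + s₃ ≡ 2 [ZMOD 4]) :
    Even (∑ w ∈ (traceFun s₁ s₂ s₃ π).coeff.support with signEps w = -1,
      (traceFun s₁ s₂ s₃ π).coeff w - π.card) := by
  let ι : ℂˣ := Units.mk0 Complex.I Complex.I_ne_zero
  have hι : ι ^ 2 = -1 := Units.ext (by simp [ι])
  have hV := eval₂_eq_of_sq_eq_neg_one hι (traceFun_mem_evenSubring s₁ s₂ s₃ π hs₁ hs₂ hs₃)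
  have hQ := eval₂_eq_of_sq_eq_neg_one hι (partitionFun_mem_evenSubring s₁ s₂ s₃ π hs₁ hs₂ hs₃)
  rw [← eval₂_one_eq_sum_coeff, eval₂_one_traceFun, sub_zero] at hV
  rw [← eval₂_one_eq_sum_coeff, eval₂_one_partitionFun] at hQ
  have h := eval₂_traceFun_of_sq_eq_neg_one s₁ s₂ s₃ π hι hs₁ hs₂ hs₃ hS
  rw [hV, hQ] at h
  generalize ∑ w ∈ (traceFun s₁ s₂ s₃ π).coeff.support with signEps w = -1,
    (traceFun s₁ s₂ s₃ π).coeff w = M at h ⊢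
  generalize ∑ w ∈ (partitionFun s₁ s₂ s₃ π).coeff.support with signEps w = -1,
    (partitionFun s₁ s₂ s₃ π).coeff w = m at h
  obtain ⟨a, ha⟩ := even_one_add_signEps s₁
  obtain ⟨b, hb⟩ := even_one_add_signEps s₂
  obtain ⟨c, hc⟩ := even_one_add_signEps s₃
  have key : 2 * M = 2 * (2 * m - π.card) - 8 * ((2 * m - π.card) ^ 2 * a * b * c) := by
    rw [ha, hb, hc] at h
    exact Int.cast_injective (α := ℂ) (by rw [h]; push_cast; ring)
  generalize (2 * m - π.card) ^ 2 * a * b * c = r at key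
  exact ⟨m - π.card - 2 * r, by omega⟩

end TraceFunction

theorem prod_signEps_mul_w_zpow_traceCoeff_general
    (s₁ s₂ s₃ : ℤ) (hs₁ : Even s₁) (hs₂ : Even s₂) (hs₃ : Even s₃)
    (hS : s₁ + s₂ + s₃ ≡ 2 [ZMOD 4])
    (π : Finset (ℕ × ℕ × ℕ)) (n : ℕ) (hn : π.card = n) :
    ∏ w ∈ Finsupp.support (traceFun s₁ s₂ s₃ π).coeff,
        (((signEps w * w : ℤ) : ℚ)) ^ (-((traceFun s₁ s₂ s₃ π).coeff w)) =
      (-1 : ℚ) ^ n *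
        ∏ w ∈ Finsupp.support (traceFun s₁ s₂ s₃ π).coeff,
          ((w : ℚ)) ^ (-((traceFun s₁ s₂ s₃ π).coeff w)) := by
  simp only [Int.cast_mul, mul_zpow, Finset.prod_mul_distrib, prod_signEps_zpow_neg]
  obtain ⟨k, hk⟩ := even_sum_coeff_traceFun_sub_card s₁ s₂ s₃ π hs₁ hs₂ hs₃ hS
  rw [sub_eq_iff_eq_add'.mp hk, hn, zpow_add₀ (by norm_num), zpow_natCast,
    Even.neg_one_zpow ⟨k, rfl⟩, mul_one]

/-- if all `sᵢ` are even, `S = s₁+s₂+s₃ ≡ 2 (mod 4)`, `π` is a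
3-dimensional partition of cardinality `n`, and the coefficient `v₀` of the trace
function `V(t) = ∑_w v_w t^w` vanishes, then in ℚ one has
`∏_{w : v_w ≠ 0} (ε(w)·w)^{−v_w} = (−1)^n · ∏_{w : v_w ≠ 0} w^{−v_w}`. -/
theorem prod_signEps_mul_w_zpow_traceCoeff
    (s₁ s₂ s₃ : ℤ) (hs₁ : Even s₁) (hs₂ : Even s₂) (hs₃ : Even s₃)
    (hS : s₁ + s₂ + s₃ ≡ 2 [ZMOD 4])
    (π : Finset (ℕ × ℕ × ℕ)) (hπ : IsPartition3 π) (n : ℕ) (hn : π.card = n)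
    (hv₀ : (traceFun s₁ s₂ s₃ π).coeff 0 = 0) :
    ∏ w ∈ Finsupp.support (traceFun s₁ s₂ s₃ π).coeff,
        (((signEps w * w : ℤ) : ℚ)) ^ (-((traceFun s₁ s₂ s₃ π).coeff w)) =
      (-1 : ℚ) ^ n *
        ∏ w ∈ Finsupp.support (traceFun s₁ s₂ s₃ π).coeff,
          ((w : ℚ)) ^ (-((traceFun s₁ s₂ s₃ π).coeff w)) :=
  prod_signEps_mul_w_zpow_traceCoeff_general s₁ s₂ s₃ hs₁ hs₂ hs₃ hS π n hn
end

section
/- Let S₊ = {(a,b) ∈ ℂ × ℂ : Im(a·conj(b)) > 0} and S₋ = {(a,b) ∈ ℂ × ℂ : Im(a·conj(b)) < 0}, and let S = {(a,b) ∈ ℂ × ℂ : Im(a·conj(b)) ≠ 0}. Then S₊ and S₋ are each nonempty, open, and connected subsets of ℂ × ℂ, and S is their disjoint union; consequently S has exactly two connected components, namely S₊ and S₋. -/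
open Complex

/-- `S₊ = {(a,b) ∈ ℂ² : Im(a·conj(b)) > 0}`. -/
def Splus : Set (ℂ × ℂ) := {p | 0 < (p.1 * (starRingEnd ℂ) p.2).im}

/-- `S₋ = {(a,b) ∈ ℂ² : Im(a·conj(b)) < 0}`. -/
def Sminus : Set (ℂ × ℂ) := {p | (p.1 * (starRingEnd ℂ) p.2).im < 0}

/-- `S = {(a,b) ∈ ℂ² : Im(a·conj(b)) ≠ 0}`. -/
def Sboth : Set (ℂ × ℂ) := {p | (p.1 * (starRingEnd ℂ) p.2).im ≠ 0}

/-! `(a, b) ↦ (a / b, b)` identifies `S₊` with `{Im z > 0} × ℂˣ`, a product of connected sets, and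
the swap `(a, b) ↦ (b, a)` exchanges `S₊` and `S₋`. Two disjoint open connected sets are exactly
the connected components of their union. -/

open Set ComplexConjugate

theorem connectedComponentIn_union_eq_left {X : Type*} [TopologicalSpace X] {U V : Set X}
    (hU : IsOpen U) (hV : IsOpen V) (hUV : Disjoint U V) (hUc : IsPreconnected U) {x : X}
    (hx : x ∈ U) : connectedComponentIn (U ∪ V) x = U :=
  subset_antisymm
    (isPreconnected_connectedComponentIn.subset_left_of_subset_union hU hV hUV
      (connectedComponentIn_subset _ _) ⟨x, mem_connectedComponentIn (subset_union_left hx), hx⟩)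
    (hUc.subset_connectedComponentIn hx subset_union_left)

theorem continuous_im_mul_conj : Continuous fun p : ℂ × ℂ => (p.1 * conj p.2).im := by
  fun_prop

theorem im_mul_mul_conj (z w : ℂ) : (z * w * conj w).im = z.im * normSq w := by
  rw [mul_assoc, mul_conj, mul_im]
  simp

theorem im_mul_conj_swap (a b : ℂ) : (b * conj a).im = -(a * conj b).im := by
  simp only [mul_im, conj_re, conj_im]
  ring

theorem isOpen_Splus : IsOpen Splus := isOpen_lt continuous_const continuous_im_mul_conj

theorem isOpen_Sminus : IsOpen Sminus := isOpen_lt continuous_im_mul_conj continuous_const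

theorem Sboth_eq_union : Sboth = Splus ∪ Sminus := by
  ext p
  exact ne_iff_lt_or_gt.trans or_comm

theorem disjoint_Splus_Sminus : Disjoint Splus Sminus :=
  disjoint_left.2 fun _ hp hm => lt_asymm (α := ℝ) hp hm

theorem Splus_eq_image :
    Splus = (fun q : ℂ × ℂ => (q.1 * q.2, q.2)) '' ({z | 0 < z.im} ×ˢ {0}ᶜ) := by
  ext ⟨a, b⟩
  constructor
  · intro h
    have hb : b ≠ 0 := by
      rintro rfl
      simp [Splus] at h
    refine ⟨(a / b, b), ⟨?_, hb⟩, by simp [div_mul_cancel₀ a hb]⟩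
    have h' : 0 < (a / b).im * normSq b := by
      rw [← im_mul_mul_conj, div_mul_cancel₀ a hb]
      exact h
    exact pos_of_mul_pos_left h' (normSq_nonneg b)
  · rintro ⟨⟨z, w⟩, ⟨hz, hw⟩, ⟨⟩⟩
    show 0 < (z * w * conj w).im
    rw [im_mul_mul_conj]
    exact mul_pos hz (normSq_pos.2 hw)

theorem Sminus_eq_image_swap : Sminus = Prod.swap '' Splus := by
  ext ⟨a, b⟩
  rw [image_swap_eq_preimage_swap]
  show (a * conj b).im < 0 ↔ 0 < (b * conj a).im
  rw [im_mul_conj_swap b a]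
  exact neg_lt_zero

theorem isConnected_Splus : IsConnected Splus := by
  rw [Splus_eq_image]
  refine IsConnected.image ?_ _ (by fun_prop)
  exact ((convex_halfSpace_im_gt 0).isConnected ⟨I, by simp⟩).prod
    (isConnected_compl_singleton_of_one_lt_rank (by simp) 0)

theorem isConnected_Sminus : IsConnected Sminus := by
  rw [Sminus_eq_image_swap]
  exact isConnected_Splus.image _ continuous_swap.continuousOn

/-- `S₊` and `S₋` are nonempty, open and connected, `S` is their
disjoint union, and `S` has exactly two connected components, namely `S₊` and `S₋`. -/
theorem Splus_Sminus_components :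
    Splus.Nonempty ∧ IsOpen Splus ∧ IsConnected Splus ∧
    Sminus.Nonempty ∧ IsOpen Sminus ∧ IsConnected Sminus ∧
    Sboth = Splus ∪ Sminus ∧ Disjoint Splus Sminus ∧
    ∀ p ∈ Sboth,
      connectedComponentIn Sboth p = Splus ∨ connectedComponentIn Sboth p = Sminus := by
  refine ⟨isConnected_Splus.nonempty, isOpen_Splus, isConnected_Splus,
    isConnected_Sminus.nonempty, isOpen_Sminus, isConnected_Sminus, Sboth_eq_union,
    disjoint_Splus_Sminus, fun p hp => ?_⟩
  rw [Sboth_eq_union] at hp ⊢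
  rcases hp with hp | hp
  · exact .inl (connectedComponentIn_union_eq_left isOpen_Splus isOpen_Sminus
      disjoint_Splus_Sminus isConnected_Splus.isPreconnected hp)
  · rw [union_comm]
    exact .inr (connectedComponentIn_union_eq_left isOpen_Sminus isOpen_Splus
      disjoint_Splus_Sminus.symm isConnected_Sminus.isPreconnected hp)
end

section
/- Let a, b, c, d ∈ ℂ with ad − bc = 1. Then the following are equivalent: (i) there exists t ∈ ℂ with t ≠ 0 such that c = t·conj(a), d = t·conj(b), −a = t⁻¹·conj(c), and −b = t⁻¹·conj(d) (i.e. the matrix g = [[a,b],[c,d]] satisfies σ·g = diag(t,t⁻¹)·ḡ, where σ = [[0,1],[−1,0]] and ḡ is the entrywise complex conjugate of g); (ii) Im(a·conj(b)) ≠ 0, c = conj(a)/(2i·Im(a·conj(b))), and d = conj(b)/(2i·Im(a·conj(b))). Moreover, when these hold, the element t in (i) is unique, equal to 1/(2i·Im(a·conj(b))), and is purely imaginary. -/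
open Complex ComplexConjugate

/-! The relation `c = t·conj a`, `d = t·conj b` turns `ad − bc = 1` into
`t·(a·conj b − conj (a·conj b)) = 1`, i.e. `t·2i·Im(a·conj b) = 1`; this pins down `t` and shows
it is purely imaginary. Conversely, for purely imaginary `t` the equations `−a = t⁻¹·conj c`,
`−b = t⁻¹·conj d` are the conjugates of `c = t·conj a`, `d = t·conj b`. -/

namespace Complex

theorem mul_conj_sub_mul_conj (a b : ℂ) :
    a * conj b - b * conj a = 2 * I * (a * conj b).im := by
  have h := sub_conj (a * conj b)
  rw [map_mul, conj_conj, mul_comm (conj a)] at h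
  rw [h]
  push_cast
  ring

theorem mul_two_mul_I_mul_im_eq_one {a b c d t : ℂ} (h : a * d - b * c = 1)
    (hc : c = t * conj a) (hd : d = t * conj b) :
    t * (2 * I * (a * conj b).im) = 1 := by
  rw [← mul_conj_sub_mul_conj, ← h, hc, hd]
  ring

theorem conj_eq_neg_of_re_eq_zero {t : ℂ} (h : t.re = 0) : conj t = -t :=
  Complex.ext (by simp [h]) (by simp)

theorem re_one_div_two_mul_I_mul_ofReal (r : ℝ) : (1 / (2 * I * r)).re = 0 := by
  simp

theorem neg_eq_inv_mul_conj_of_conj_eq_neg {t z w : ℂ} (ht : conj t = -t) (ht0 : t ≠ 0)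
    (hw : w = t * conj z) : -z = t⁻¹ * conj w := by
  rw [hw, map_mul, conj_conj, ht]
  field_simp

end Complex

/-- for `a, b, c, d ∈ ℂ` with `ad − bc = 1`, the existence of a nonzero
`t ∈ ℂ` with `c = t·conj a`, `d = t·conj b`, `−a = t⁻¹·conj c`, `−b = t⁻¹·conj d`
(i.e. `σ·g = diag(t,t⁻¹)·ḡ` for `g = [[a,b],[c,d]]`) is equivalent to
`Im(a·conj b) ≠ 0`, `c = conj a/(2i·Im(a·conj b))` and `d = conj b/(2i·Im(a·conj b))`;
moreover such a `t` is unique, equal to `1/(2i·Im(a·conj b))`, and purely imaginary. -/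
theorem sl2_minus_parametrization (a b c d : ℂ) (h : a * d - b * c = 1) :
    ((∃ t : ℂ, t ≠ 0 ∧ c = t * (starRingEnd ℂ) a ∧ d = t * (starRingEnd ℂ) b ∧
        -a = t⁻¹ * (starRingEnd ℂ) c ∧ -b = t⁻¹ * (starRingEnd ℂ) d) ↔
      ((a * (starRingEnd ℂ) b).im ≠ 0 ∧
        c = (starRingEnd ℂ) a / (2 * I * ((a * (starRingEnd ℂ) b).im : ℂ)) ∧
        d = (starRingEnd ℂ) b / (2 * I * ((a * (starRingEnd ℂ) b).im : ℂ)))) ∧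
    (∀ t : ℂ, t ≠ 0 → c = t * (starRingEnd ℂ) a → d = t * (starRingEnd ℂ) b →
      -a = t⁻¹ * (starRingEnd ℂ) c → -b = t⁻¹ * (starRingEnd ℂ) d →
      t = 1 / (2 * I * ((a * (starRingEnd ℂ) b).im : ℂ)) ∧ t.re = 0) := by
  set r := (a * conj b).im
  have solve (t : ℂ) (hc : c = t * conj a) (hd : d = t * conj b) :
      r ≠ 0 ∧ t = 1 / (2 * I * r) := by
    have ht := mul_two_mul_I_mul_im_eq_one h hc hd
    exact ⟨ofReal_ne_zero.mp (right_ne_zero_of_mul (right_ne_zero_of_mul_eq_one ht)),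
      eq_one_div_of_mul_eq_one_left ht⟩
  refine ⟨⟨?_, ?_⟩, ?_⟩
  · rintro ⟨t, -, hc, hd, -, -⟩
    obtain ⟨hr, rfl⟩ := solve t hc hd
    exact ⟨hr, by rw [hc, one_div_mul_eq_div], by rw [hd, one_div_mul_eq_div]⟩
  · rintro ⟨hr, hc, hd⟩
    have ht0 : 1 / (2 * I * r) ≠ 0 := by simp [hr]
    have ht := conj_eq_neg_of_re_eq_zero (re_one_div_two_mul_I_mul_ofReal r)
    rw [← one_div_mul_eq_div] at hc hd
    exact ⟨_, ht0, hc, hd, neg_eq_inv_mul_conj_of_conj_eq_neg ht ht0 hc,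
      neg_eq_inv_mul_conj_of_conj_eq_neg ht ht0 hd⟩
  · rintro t - hc hd - -
    obtain ⟨-, rfl⟩ := solve t hc hd
    exact ⟨rfl, re_one_div_two_mul_I_mul_ofReal r⟩
end
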